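/- arXiv:2008.09797 — 11 statements merged into one kernel-verified Lean document; each statement's English description precedes it below -/
import Mathlib

section
/- Let c be a nonzero complex number and d a positive integer, and let f(z) = c·z^d + e^z. Then the image under f of every unbounded curve is unbounded: for every continuous map γ : [0,∞) → ℂ whose image {γ(t) : t ≥ 0} is not a bounded subset of ℂ, the set {c·γ(t)^d + exp(γ(t)) : t ≥ 0} is not a bounded subset of ℂ. -/
/-!
Suppose `f z = c * z ^ d + exp z` stays bounded by `M` along `γ`. Where `‖f z‖ ≤ M` and `‖z‖`
is large, `‖exp z‖ ≥ ‖c‖ ‖z‖ ^ d - M` dominates the change `O(‖z‖ ^ (d - 1))` of the polynomial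
part over a unit distance, so `exp (w - z) = exp w / exp z` is close to `1` and hence `w - z` is
small. Far out, the sublevel set `{‖f‖ ≤ M}` therefore contains no two points at distance exactly
`1`, whereas the connected, unbounded image of `γ` contains such a pair.
-/

open Complex Filter Bornology

lemma norm_pow_sub_pow_le {R : Type*} [SeminormedCommRing R] [NormOneClass R] {x y : R} {K : ℝ}
    (hx : ‖x‖ ≤ K) (hy : ‖y‖ ≤ K) (n : ℕ) :
    ‖x ^ n - y ^ n‖ ≤ n * K ^ (n - 1) * ‖x - y‖ := by
  have hK : 0 ≤ K := (norm_nonneg x).trans hx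
  have hterm : ∀ i ∈ Finset.range n, ‖x ^ i * y ^ (n - 1 - i)‖ ≤ K ^ (n - 1) := by
    intro i hi
    have hi : i + (n - 1 - i) = n - 1 := by grind
    calc ‖x ^ i * y ^ (n - 1 - i)‖ ≤ ‖x‖ ^ i * ‖y‖ ^ (n - 1 - i) :=
          (norm_mul_le _ _).trans (mul_le_mul (norm_pow_le x i) (norm_pow_le y _)
            (norm_nonneg _) (by positivity))
      _ ≤ K ^ i * K ^ (n - 1 - i) := by gcongr
      _ = K ^ (n - 1) := by rw [← pow_add, hi]
  calc ‖x ^ n - y ^ n‖ ≤ ‖∑ i ∈ Finset.range n, x ^ i * y ^ (n - 1 - i)‖ * ‖x - y‖ := by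
        rw [← geom_sum₂_mul]; exact norm_mul_le _ _
    _ ≤ n * K ^ (n - 1) * ‖x - y‖ := by
        gcongr
        simpa using (norm_sum_le _ _).trans (Finset.sum_le_sum hterm)

lemma Complex.norm_le_of_norm_exp_sub_one_le {ζ : ℂ} (hζ : ‖ζ‖ < Real.pi)
    (h : ‖exp ζ - 1‖ ≤ 1 / 2) : ‖ζ‖ ≤ 3 / 2 * ‖exp ζ - 1‖ := by
  have him : |ζ.im| < Real.pi := (abs_im_le_norm ζ).trans_lt hζ
  have hlog : log (exp ζ) = ζ := log_exp (abs_lt.1 him).1 (abs_lt.1 him).2.le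
  simpa [hlog] using norm_log_one_add_half_le_self (z := exp ζ - 1) h

lemma IsPreconnected.exists_norm_sub_eq {E : Type*} [SeminormedAddCommGroup E] {S : Set E}
    (hS : IsPreconnected S) (hSb : ¬IsBounded S) {z : E} (hz : z ∈ S) {r : ℝ} (hr : 0 ≤ r) :
    ∃ w ∈ S, ‖w - z‖ = r := by
  obtain ⟨w, hwS, hw⟩ : ∃ w ∈ S, r ≤ ‖w - z‖ := by
    by_contra! h
    exact hSb (Metric.isBounded_closedBall.subset
      fun w hw => mem_closedBall_iff_norm.2 (h w hw).le)
  exact hS.intermediate_value hz hwS (continuous_id.sub continuous_const).norm.continuousOn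
    ⟨by simpa using hr, hw⟩

lemma eventually_add_mul_add_one_pow_lt (A B : ℝ) {C : ℝ} (hC : 0 < C) {d : ℕ} (hd : 0 < d) :
    ∀ᶠ r in atTop, A + B * (r + 1) ^ (d - 1) < C * r ^ d := by
  filter_upwards [eventually_ge_atTop 1, eventually_gt_atTop ((|A| + |B| * 2 ^ (d - 1)) / C)]
    with r hr1 hr
  have hpow : 1 ≤ r ^ (d - 1) := one_le_pow₀ hr1
  have hsucc : (r + 1) ^ (d - 1) ≤ 2 ^ (d - 1) * r ^ (d - 1) := by
    rw [← mul_pow]; gcongr; linarith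
  rw [div_lt_iff₀ hC] at hr
  calc A + B * (r + 1) ^ (d - 1) ≤ |A| * r ^ (d - 1) + |B| * (2 ^ (d - 1) * r ^ (d - 1)) := by
        gcongr ?_ + ?_
        · nlinarith [le_abs_self A, abs_nonneg A]
        · calc B * (r + 1) ^ (d - 1) ≤ |B| * (r + 1) ^ (d - 1) := by gcongr; exact le_abs_self B
            _ ≤ _ := by gcongr
    _ = (|A| + |B| * 2 ^ (d - 1)) * r ^ (d - 1) := by ring
    _ < r * C * r ^ (d - 1) := by gcongr
    _ = C * r ^ d := by rw [mul_comm r, mul_assoc, ← pow_succ', Nat.sub_add_cancel hd]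

lemma norm_exp_sub_one_mul_le {c z w : ℂ} {d : ℕ} {M : ℝ} (hz : ‖c * z ^ d + exp z‖ ≤ M)
    (hw : ‖c * w ^ d + exp w‖ ≤ M) (hwz : ‖w - z‖ ≤ 1) :
    ‖exp (w - z) - 1‖ * (‖c‖ * ‖z‖ ^ d - M) ≤ 2 * M + ‖c‖ * d * (‖z‖ + 1) ^ (d - 1) := by
  have hexp : ‖c‖ * ‖z‖ ^ d - M ≤ ‖exp z‖ := by
    have := norm_sub_le (c * z ^ d + exp z) (exp z)
    rw [add_sub_cancel_right, norm_mul, norm_pow] at this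
    linarith
  have hpow : ‖w ^ d - z ^ d‖ ≤ d * (‖z‖ + 1) ^ (d - 1) := by
    have hw1 : ‖w‖ ≤ ‖z‖ + 1 := by
      linarith [norm_le_norm_add_norm_sub' w z, norm_sub_rev z w]
    calc ‖w ^ d - z ^ d‖ ≤ d * (‖z‖ + 1) ^ (d - 1) * ‖w - z‖ :=
          norm_pow_sub_pow_le hw1 (by linarith) d
      _ ≤ d * (‖z‖ + 1) ^ (d - 1) := mul_le_of_le_one_right (by positivity) hwz
  calc ‖exp (w - z) - 1‖ * (‖c‖ * ‖z‖ ^ d - M) ≤ ‖exp (w - z) - 1‖ * ‖exp z‖ := by gcongr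
    _ = ‖(c * w ^ d + exp w) - (c * z ^ d + exp z) - c * (w ^ d - z ^ d)‖ := by
        rw [← norm_mul, sub_mul, ← exp_add, sub_add_cancel, one_mul]
        ring_nf
    _ ≤ M + M + ‖c‖ * (d * (‖z‖ + 1) ^ (d - 1)) := by
        refine (norm_sub_le _ _).trans (add_le_add ((norm_sub_le _ _).trans (add_le_add hw hz)) ?_)
        rw [norm_mul]
        gcongr
    _ = 2 * M + ‖c‖ * d * (‖z‖ + 1) ^ (d - 1) := by ring

lemma exists_norm_sub_ne_one_of_norm_le {c : ℂ} (hc : c ≠ 0) {d : ℕ} (hd : 0 < d) (M : ℝ) :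
    ∃ R, ∀ z w : ℂ, R ≤ ‖z‖ → ‖c * z ^ d + exp z‖ ≤ M → ‖c * w ^ d + exp w‖ ≤ M →
      ‖w - z‖ ≠ 1 := by
  -- these coefficients make `‖c‖ * ‖z‖ ^ d - M` exceed twice the bound of `norm_exp_sub_one_mul_le`
  obtain ⟨R, hR⟩ := eventually_atTop.1
    (eventually_add_mul_add_one_pow_lt (5 * M) (2 * ‖c‖ * d) (norm_pos_iff.2 hc) hd)
  refine ⟨R, fun z w hRz hz hw hwz => ?_⟩
  have hM : 0 ≤ M := (norm_nonneg _).trans hz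
  have hestimate := norm_exp_sub_one_mul_le hz hw hwz.le
  have hlarge := hR _ hRz
  have hN : 0 ≤ 2 * ‖c‖ * d * (‖z‖ + 1) ^ (d - 1) := by positivity
  have hsmall : ‖exp (w - z) - 1‖ ≤ 1 / 2 := by
    by_contra! h
    nlinarith [mul_lt_mul_of_pos_right h (show 0 < ‖c‖ * ‖z‖ ^ d - M by linarith)]
  have := Complex.norm_le_of_norm_exp_sub_one_le (by linarith [Real.pi_gt_three]) hsmall
  linarith

/-- For `c ≠ 0` and `d ≥ 1`, the image under `f(z) = c z^d + e^z` of every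
unbounded curve `γ : [0,∞) → ℂ` is unbounded. -/
theorem stmt_0 (c : ℂ) (hc : c ≠ 0) (d : ℕ) (hd : 0 < d)
    (γ : ℝ → ℂ) (hγ : ContinuousOn γ (Set.Ici 0))
    (hub : ¬ Bornology.IsBounded (γ '' Set.Ici 0)) :
    ¬ Bornology.IsBounded ((fun t => c * γ t ^ d + Complex.exp (γ t)) '' Set.Ici 0) := by
  intro hb
  obtain ⟨M, hM⟩ := isBounded_iff_forall_norm_le.1 hb
  have hfγ : ∀ t ∈ Set.Ici (0 : ℝ), ‖c * γ t ^ d + exp (γ t)‖ ≤ M :=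
    fun t ht => hM _ (Set.mem_image_of_mem _ ht)
  obtain ⟨R, hR⟩ := exists_norm_sub_ne_one_of_norm_le hc hd M
  obtain ⟨_, ⟨s, hs, rfl⟩, hRs⟩ : ∃ z ∈ γ '' Set.Ici 0, R ≤ ‖z‖ := by
    by_contra! h
    exact hub (isBounded_iff_forall_norm_le.2 ⟨R, fun z hz => (h z hz).le⟩)
  obtain ⟨_, ⟨t, ht, rfl⟩, hts⟩ := (isPreconnected_Ici.image γ hγ).exists_norm_sub_eq hub
    (Set.mem_image_of_mem γ hs) zero_le_one
  exact hR _ _ hRs (hfγ s hs) (hfγ t ht) hts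
end

section
/- Let c be a nonzero complex number and d a positive integer. Then the set {z ∈ ℂ : c·d·z^(d−1) + exp(z) = 0} is infinite. -/
/-!
Put `w = -c d` and `k = d - 1`, so that the equation reads `exp z = w z^k`. Off `0` its
solutions are the fixed points of the branches `F_n z = log w + k log z + 2πin`. On the disc of
radius `n` about `2πin` one has `‖log z‖ = O(log n)` and `‖F_n'‖ = k / ‖z‖ ≤ k / (5n)`, so for
large `n` the branch `F_n` maps this disc into itself as a contraction. Banach's fixed-point
theorem then gives a solution of modulus at least `5n`, hence the solution set is unbounded.
-/

open Complex Filter Function Metric Set Bornology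
open scoped NNReal Real

theorem LipschitzOnWith.exists_isFixedPt_of_mapsTo {α : Type*} [MetricSpace α] [CompleteSpace α]
    {f : α → α} {s : Set α} {K : ℝ≥0} (hf : LipschitzOnWith K f s) (hK : K < 1)
    (hs : IsClosed s) (hmaps : MapsTo f s s) (hne : s.Nonempty) : ∃ x ∈ s, IsFixedPt f x := by
  obtain ⟨x, hx⟩ := hne
  obtain ⟨y, hy, hfix, -⟩ := ContractingWith.exists_fixedPoint' hs.isComplete hmaps
    ⟨hK, hf.mapsToRestrict hmaps⟩ hx (edist_ne_top _ _)
  exact ⟨y, hy, hfix⟩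

theorem Real.eventually_add_mul_log_le (A B : ℝ) : ∀ᶠ x in atTop, A + B * Real.log x ≤ x := by
  have hlo := ((Asymptotics.isLittleO_const_id_atTop A).add
    (Real.isLittleO_log_id_atTop.const_mul_left B)).bound one_pos
  filter_upwards [hlo, eventually_ge_atTop 0] with x hx hx0
  simpa [abs_of_nonneg hx0] using (le_abs_self _).trans hx

namespace Complex

theorem norm_log_le_log_norm_add_pi {z : ℂ} (hz : 1 ≤ ‖z‖) : ‖log z‖ ≤ Real.log ‖z‖ + π :=
  calc ‖log z‖ ≤ |(log z).re| + |(log z).im| := norm_le_abs_re_add_abs_im _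
    _ ≤ Real.log ‖z‖ + π := by
      rw [log_re, log_im, abs_of_nonneg (Real.log_nonneg hz)]
      gcongr
      exact abs_arg_le_pi z

theorem norm_log_sub_log_le {ρ : ℝ} (hρ : 0 < ρ) {z w : ℂ} (hz : ρ ≤ z.im) (hw : ρ ≤ w.im) :
    ‖log z - log w‖ ≤ ρ⁻¹ * ‖z - w‖ := by
  refine (convex_halfSpace_im_ge ρ).norm_image_sub_le_of_norm_hasDerivWithin_le
    (fun x hx => (hasDerivAt_log ?_).hasDerivWithinAt) (fun x hx => ?_) hw hz
  · exact mem_slitPlane_iff.mpr (Or.inr (hρ.trans_le hx).ne')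
  · rw [norm_inv]
    exact inv_anti₀ hρ (hx.trans (im_le_norm x))

theorem five_mul_le_im_and_norm_le_of_mem_closedBall {n : ℕ} {z : ℂ}
    (hz : z ∈ closedBall ((n : ℂ) * (2 * π * I)) n) : 5 * n ≤ z.im ∧ ‖z‖ ≤ 8 * n := by
  have hn : (0 : ℝ) ≤ n := n.cast_nonneg
  have hpi := Real.pi_gt_three
  have hpi' := Real.pi_lt_d2
  have hdist : ‖z - n * (2 * π * I)‖ ≤ n := by rwa [mem_closedBall, dist_eq_norm] at hz
  have him : (z - n * (2 * π * I)).im = z.im - 2 * π * n := by simp; ring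
  have hnorm : ‖(n : ℂ) * (2 * π * I)‖ = 2 * π * n := by simp [abs_of_pos Real.pi_pos]; ring
  constructor
  · nlinarith [neg_le_of_abs_le ((abs_im_le_norm _).trans hdist)]
  · nlinarith [norm_le_of_mem_closedBall hz]

noncomputable def logMulPowBranch (w : ℂ) (k n : ℕ) (z : ℂ) : ℂ :=
  log w + k * log z + n * (2 * π * I)

theorem exp_eq_mul_pow_of_isFixedPt_logMulPowBranch {w z : ℂ} {k n : ℕ} (hw : w ≠ 0)
    (hz : z ≠ 0) (hfix : IsFixedPt (logMulPowBranch w k n) z) : exp z = w * z ^ k := by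
  conv_lhs => rw [← hfix.eq]
  rw [logMulPowBranch, exp_add, exp_add, exp_log hw, exp_nat_mul, exp_log hz,
    exp_nat_mul_two_pi_mul_I, mul_one]

theorem mapsTo_logMulPowBranch {w : ℂ} {k n : ℕ} (hn : 1 ≤ n)
    (h : ‖log w‖ + k * (Real.log 8 + π) + k * Real.log n ≤ n) :
    MapsTo (logMulPowBranch w k n) (closedBall ((n : ℂ) * (2 * π * I)) n)
      (closedBall ((n : ℂ) * (2 * π * I)) n) := by
  intro z hz
  obtain ⟨him, hnorm⟩ := five_mul_le_im_and_norm_le_of_mem_closedBall hz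
  have hn' : (1 : ℝ) ≤ n := by exact_mod_cast hn
  have hz1 : 1 ≤ ‖z‖ := by linarith [im_le_norm z]
  have hlog : ‖log z‖ ≤ Real.log 8 + Real.log n + π := by
    rw [← Real.log_mul (by norm_num) (by positivity)]
    linarith [norm_log_le_log_norm_add_pi hz1,
      Real.log_le_log (by positivity) hnorm]
  rw [mem_closedBall, dist_eq_norm]
  calc ‖logMulPowBranch w k n z - n * (2 * π * I)‖ = ‖log w + k * log z‖ := by
        simp [logMulPowBranch]
    _ ≤ ‖log w‖ + k * ‖log z‖ := by
        simpa using norm_add_le (log w) (k * log z)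
    _ ≤ n := by nlinarith [(k.cast_nonneg : (0 : ℝ) ≤ k)]

theorem lipschitzOnWith_logMulPowBranch (w : ℂ) (k : ℕ) {n : ℕ} (hn : 0 < n) :
    LipschitzOnWith (Real.toNNReal ((k : ℝ) / (5 * n))) (logMulPowBranch w k n)
      (closedBall ((n : ℂ) * (2 * π * I)) n) := by
  have hn' : (0 : ℝ) < n := by exact_mod_cast hn
  rw [lipschitzOnWith_iff_norm_sub_le]
  intro z hz y hy
  calc ‖logMulPowBranch w k n z - logMulPowBranch w k n y‖ = k * ‖log z - log y‖ := by
        simp [logMulPowBranch, ← mul_sub]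
    _ ≤ k * ((5 * (n : ℝ))⁻¹ * ‖z - y‖) := by
        gcongr
        exact norm_log_sub_log_le (by positivity)
          (five_mul_le_im_and_norm_le_of_mem_closedBall hz).1
          (five_mul_le_im_and_norm_le_of_mem_closedBall hy).1
    _ = _ := by
        rw [Real.coe_toNNReal _ (by positivity)]
        ring

theorem not_isBounded_setOf_exp_eq_mul_pow {w : ℂ} (hw : w ≠ 0) (k : ℕ) :
    ¬IsBounded {z : ℂ | exp z = w * z ^ k} := by
  rw [isBounded_iff_forall_norm_le]
  push Not
  intro R
  obtain ⟨n, ⟨hlog, hR⟩, hk⟩ : ∃ n : ℕ,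
      (‖log w‖ + k * (Real.log 8 + π) + k * Real.log n ≤ n ∧ R < n) ∧ k < n :=
    ((tendsto_natCast_atTop_atTop.eventually ((Real.eventually_add_mul_log_le _ _).and
      (eventually_gt_atTop _))).and (eventually_gt_atTop _)).exists
  have hn : 0 < n := Nat.zero_lt_of_lt hk
  have hK : Real.toNNReal ((k : ℝ) / (5 * n)) < 1 := by
    rw [Real.toNNReal_lt_one, div_lt_one (by positivity)]
    linarith [(Nat.cast_lt (α := ℝ)).mpr hk]
  obtain ⟨z, hz, hfix⟩ := (lipschitzOnWith_logMulPowBranch w k hn).exists_isFixedPt_of_mapsTo hK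
    isClosed_closedBall (mapsTo_logMulPowBranch hn hlog) ⟨_, mem_closedBall_self n.cast_nonneg⟩
  have hnz : (n : ℝ) ≤ ‖z‖ := by
    linarith [(five_mul_le_im_and_norm_le_of_mem_closedBall hz).1,
      im_le_norm z, (n.cast_nonneg : (0 : ℝ) ≤ n)]
  have hz0 : z ≠ 0 := norm_pos_iff.mp ((Nat.cast_pos.mpr hn).trans_le hnz)
  exact ⟨z, exp_eq_mul_pow_of_isFixedPt_logMulPowBranch hw hz0 hfix, hR.trans_le hnz⟩

end Complex

/-- For `c ≠ 0` and `d ≥ 1`, the set of critical points of `z ↦ 1/(c z^d + e^z)`,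
i.e. the set of solutions of `c d z^(d-1) + e^z = 0`, is infinite. -/
theorem stmt_1 (c : ℂ) (hc : c ≠ 0) (d : ℕ) (hd : 0 < d) :
    {z : ℂ | c * (d : ℂ) * z ^ (d - 1) + Complex.exp z = 0}.Infinite := by
  have hw : -(c * d) ≠ 0 := neg_ne_zero.mpr (mul_ne_zero hc (Nat.cast_ne_zero.mpr hd.ne'))
  have hset : {z : ℂ | c * (d : ℂ) * z ^ (d - 1) + Complex.exp z = 0} =
      {z : ℂ | Complex.exp z = -(c * d) * z ^ (d - 1)} := by
    ext z
    simp only [neg_mul]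
    exact add_eq_zero_iff_eq_neg'
  rw [hset]
  exact fun hfin => Complex.not_isBounded_setOf_exp_eq_mul_pow hw _ hfin.isBounded
end

section
/- For every real λ with 0 < λ < 1/20: for every x ≥ 0 and every p > 0 with p·(e^p + p) = λ, the sequence of iterates f_λ^[n](x) converges to p as n → ∞. -/
open Filter

lemma stmt_8_lip (lam : ℝ) (h0 : 0 < lam) {a b : ℝ} (ha : 0 ≤ a) (hb : 0 ≤ b) :
    |lam / (Real.exp a + a) - lam / (Real.exp b + b)| ≤ 2 * lam * |a - b| := by
  wlog h : a ≤ b generalizing a b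
  · rw [abs_sub_comm, abs_sub_comm a b]; exact this hb ha (le_of_not_ge h)
  have Da : (1:ℝ) ≤ Real.exp a + a := by have := Real.one_le_exp ha; linarith
  have Da0 : (0:ℝ) < Real.exp a + a := by linarith
  have Db0 : (0:ℝ) < Real.exp b + b := by have := Real.exp_pos b; linarith
  have hmono : Real.exp a + a ≤ Real.exp b + b := by
    have := Real.exp_le_exp.2 h; linarith
  have h4 : (1:ℝ) ≤ Real.exp b := Real.one_le_exp hb
  have hnum : Real.exp b + b - (Real.exp a + a) ≤ 2 * Real.exp b * (b - a) := by
    have h1 : Real.exp b - Real.exp a ≤ Real.exp b * (b - a) := by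
      have h2 := Real.add_one_le_exp (a - b)
      have h3 : (a - b + 1) * Real.exp b ≤ Real.exp (a - b) * Real.exp b := by
        nlinarith [Real.exp_pos b]
      rw [← Real.exp_add] at h3
      have he : a - b + b = a := by ring
      rw [he] at h3
      nlinarith
    nlinarith
  have hnn : lam / (Real.exp b + b) ≤ lam / (Real.exp a + a) := by
    gcongr
  rw [abs_of_nonneg (by linarith), abs_sub_comm, abs_of_nonneg (by linarith)]
  rw [div_sub_div _ _ (ne_of_gt Da0) (ne_of_gt Db0), div_le_iff₀ (by positivity)]
  have hDab : Real.exp b ≤ (Real.exp a + a) * (Real.exp b + b) := by nlinarith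
  calc lam * (Real.exp b + b) - (Real.exp a + a) * lam
      = lam * ((Real.exp b + b) - (Real.exp a + a)) := by ring
    _ ≤ lam * (2 * Real.exp b * (b - a)) := by
        apply mul_le_mul_of_nonneg_left hnum h0.le
    _ ≤ 2 * lam * (b - a) * ((Real.exp a + a) * (Real.exp b + b)) := by
        nlinarith [mul_nonneg (mul_nonneg h0.le (sub_nonneg.2 h)) (sub_nonneg.2 hDab)]

/-- For `0 < λ < 1/20`, every orbit of `f_λ(x) = λ/(e^x + x)` starting at
`x ≥ 0` converges to the positive fixed point `p`. -/
theorem stmt_8 (lam : ℝ) (h0 : 0 < lam) (h1 : lam < 1 / 20)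
    (x : ℝ) (hx : 0 ≤ x) (p : ℝ) (hp : 0 < p) (hfix : p * (Real.exp p + p) = lam) :
    Tendsto (fun n => (fun y => lam / (Real.exp y + y))^[n] x) atTop (nhds p) := by
  set f : ℝ → ℝ := fun y => lam / (Real.exp y + y) with hf
  have hDp : (0:ℝ) < Real.exp p + p := by have := Real.exp_pos p; linarith
  have hfp : f p = p := by
    simp only [hf]
    rw [div_eq_iff (ne_of_gt hDp)]
    linarith
  have hpos : ∀ y, 0 ≤ y → 0 ≤ f y := by
    intro y hy
    have : (0:ℝ) < Real.exp y + y := by have := Real.one_le_exp hy; linarith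
    positivity
  have hnn : ∀ n, 0 ≤ f^[n] x := by
    intro n; induction n with
    | zero => simpa using hx
    | succ n ih => rw [Function.iterate_succ_apply']; exact hpos _ ih
  have hbound : ∀ n, |f^[n] x - p| ≤ (2 * lam) ^ n * |x - p| := by
    intro n; induction n with
    | zero => simp
    | succ n ih =>
      rw [Function.iterate_succ_apply']
      calc |f (f^[n] x) - p| = |f (f^[n] x) - f p| := by rw [hfp]
        _ ≤ 2 * lam * |f^[n] x - p| := stmt_8_lip lam h0 (hnn n) hp.le
        _ ≤ 2 * lam * ((2 * lam) ^ n * |x - p|) := by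
            apply mul_le_mul_of_nonneg_left ih (by linarith)
        _ = (2 * lam) ^ (n + 1) * |x - p| := by ring
  have hgeo : Tendsto (fun n => (2 * lam) ^ n * |x - p|) atTop (nhds 0) := by
    have : Tendsto (fun n : ℕ => (2 * lam) ^ n) atTop (nhds 0) :=
      tendsto_pow_atTop_nhds_zero_of_lt_one (by linarith) (by linarith)
    simpa using this.mul_const |x - p|
  rw [tendsto_iff_dist_tendsto_zero]
  apply squeeze_zero (fun n => dist_nonneg) _ hgeo
  intro n
  rw [Real.dist_eq]
  exact hbound n
end

section
/- For every real λ > 1 + e, the unique positive fixed point of f_λ is repelling and exceeds 1: for every x > 0 with x·(eˣ + x) = λ one has x > 1 and λ·(1 + eˣ)/(x + eˣ)² > 1 (i.e. |f_λ′(x)| > 1). -/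
/-- For `λ > 1 + e`, the unique positive fixed point of `f_λ(x) = λ/(e^x + x)`
exceeds `1` and is repelling. -/
theorem stmt_10 (lam : ℝ) (hlam : 1 + Real.exp 1 < lam) :
    ∀ x : ℝ, 0 < x → x * (Real.exp x + x) = lam →
      1 < x ∧ 1 < lam * (1 + Real.exp x) / (x + Real.exp x) ^ 2 := by
  intro x hx hfix
  have hE := Real.exp_pos x
  have h1 : 1 < x := by
    by_contra h
    push_neg at h
    have hle : x * (Real.exp x + x) ≤ 1 * (Real.exp 1 + 1) :=
      mul_le_mul h (add_le_add (Real.exp_le_exp.mpr h) h) (by positivity) (by positivity)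
    nlinarith
  refine ⟨h1, ?_⟩
  have hden : 0 < x + Real.exp x := by linarith
  rw [← hfix]
  have heq : x * (Real.exp x + x) * (1 + Real.exp x) / (x + Real.exp x) ^ 2
      = x * (1 + Real.exp x) / (x + Real.exp x) := by
    field_simp
    ring
  rw [heq, lt_div_iff₀ hden]
  nlinarith
end

section
/- For every real λ > 1 + e, the map f_λ has a 2-periodic point in (0,1): there exists a with 0 < a < 1 such that f_λ(f_λ(a)) = a and f_λ(a) ≠ a. -/
/-- For `λ > 1 + e`, the map `f_λ(x) = λ/(e^x + x)` has a `2`-periodic point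
in `(0,1)`. -/
theorem stmt_11 (lam : ℝ) (hlam : 1 + Real.exp 1 < lam) :
    ∃ a : ℝ, 0 < a ∧ a < 1 ∧
      lam / (Real.exp (lam / (Real.exp a + a)) + lam / (Real.exp a + a)) = a ∧
      lam / (Real.exp a + a) ≠ a := by
  have he : (0:ℝ) < Real.exp 1 := Real.exp_pos 1
  have hlam0 : 0 < lam := by linarith
  set f : ℝ → ℝ := fun x => lam / (Real.exp x + x) with hf
  have hdpos : ∀ x : ℝ, 0 ≤ x → 0 < Real.exp x + x := fun x hx => by
    have := Real.exp_pos x; linarith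
  have hfpos : ∀ x : ℝ, 0 ≤ x → 0 < f x := fun x hx =>
    div_pos hlam0 (hdpos x hx)
  have hfc : ContinuousOn f (Set.Ici 0) := by
    apply ContinuousOn.div continuousOn_const
      (Real.continuous_exp.continuousOn.add continuousOn_id)
    intro x hx
    exact ne_of_gt (hdpos x hx)
  have hmaps : Set.MapsTo f (Set.Ici 0) (Set.Ici 0) := fun x hx =>
    le_of_lt (hfpos x hx)
  set g : ℝ → ℝ := fun x => f (f x) - x with hg
  have hgc : ContinuousOn g (Set.Icc 0 1) := by
    apply ContinuousOn.sub _ continuousOn_id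
    exact (hfc.comp hfc hmaps).mono (fun x hx => hx.1)
  -- g 0 > 0
  have hg0 : 0 < g 0 := by
    simp only [hg, sub_zero]
    exact hfpos _ (le_of_lt (hfpos 0 le_rfl))
  -- g 1 < 0
  set t : ℝ := lam / (Real.exp 1 + 1) with htdef
  have ht1 : 1 < t := by
    rw [htdef, lt_div_iff₀ (by linarith)]
    linarith
  have hlam_eq : lam = t * (Real.exp 1 + 1) := by
    rw [htdef]; field_simp
  have het : Real.exp 1 * t < Real.exp t := by
    have h1 : t - 1 + 1 < Real.exp (t - 1) := Real.add_one_lt_exp (by linarith)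
    have h2 : Real.exp (t - 1) * Real.exp 1 = Real.exp t := by
      rw [← Real.exp_add]; ring_nf
    nlinarith [Real.exp_pos 1]
  have hf1 : f 1 = t := by
    simp [hf, htdef]
  have hg1 : g 1 < 0 := by
    simp only [hg, hf1]
    have hdt : 0 < Real.exp t + t := hdpos t (by linarith)
    have : f t < 1 := by
      rw [hf, div_lt_one hdt]
      nlinarith
    linarith
  -- IVT
  have hmem : (0:ℝ) ∈ Set.Icc (g 1) (g 0) := ⟨le_of_lt hg1, le_of_lt hg0⟩
  obtain ⟨a, ha, hga⟩ := intermediate_value_Icc' (by norm_num) hgc hmem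
  have ha0 : 0 < a := by
    rcases lt_or_eq_of_le ha.1 with h | h
    · exact h
    · exfalso; rw [← h] at hga; linarith
  have ha1 : a < 1 := by
    rcases lt_or_eq_of_le ha.2 with h | h
    · exact h
    · exfalso; rw [h] at hga; linarith
  have hffa : f (f a) = a := by
    have : f (f a) - a = 0 := hga
    linarith
  refine ⟨a, ha0, ha1, hffa, ?_⟩
  -- f a > 1 > a
  have hda : Real.exp a + a < Real.exp 1 + 1 := by
    have := Real.exp_lt_exp.mpr ha1
    linarith
  have hfa : 1 < f a := by
    have h1 : t ≤ f a := by
      rw [htdef, hf]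
      apply div_le_div_of_nonneg_left (le_of_lt hlam0) (hdpos a (le_of_lt ha0))
      linarith
    linarith
  intro h
  simp only [hf] at hfa
  linarith
end

section
/- Let λ > 1 + e be real and write g = f_λ. Suppose a > 0 satisfies g(g(a)) = a and g(g(x)) ≠ x for all x ∈ (0, a). Then for every x ∈ [0, a), the even iterates g^[2n](x) converge to a as n → ∞. -/
open Filter

/-- For `λ > 1 + e` and `g = f_λ`, if `a > 0` is the smallest positive
`2`-periodic point of `g` (that is, `g(g(a)) = a` and `g(g(x)) ≠ x` on
`(0,a)`), then for every `x ∈ [0,a)` the even iterates `g^[2n](x)` converge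
to `a`. -/
theorem stmt_12 (lam : ℝ) (hlam : 1 + Real.exp 1 < lam)
    (g : ℝ → ℝ) (hg : ∀ x : ℝ, g x = lam / (Real.exp x + x))
    (a : ℝ) (ha : 0 < a) (hper : g (g a) = a)
    (hmin : ∀ x ∈ Set.Ioo 0 a, g (g x) ≠ x) :
    ∀ x ∈ Set.Ico 0 a, Tendsto (fun n => g^[2 * n] x) atTop (nhds a) := by
  have hlam0 : 0 < lam := lt_trans (by positivity) hlam
  have hden : ∀ x : ℝ, 0 ≤ x → 0 < Real.exp x + x := fun x hx =>
    add_pos_of_pos_of_nonneg (Real.exp_pos x) hx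
  have hgpos : ∀ x : ℝ, 0 ≤ x → 0 < g x := by
    intro x hx; rw [hg]; exact div_pos hlam0 (hden x hx)
  -- g strictly antitone on [0,∞)
  have hganti : ∀ x y : ℝ, 0 ≤ x → x < y → g y < g x := by
    intro x y hx hxy
    rw [hg, hg]
    apply div_lt_div_of_pos_left hlam0 (hden x hx)
    have := Real.exp_lt_exp.mpr hxy
    linarith
  set G : ℝ → ℝ := fun y => g (g y) with hGdef
  have hGpos : ∀ x : ℝ, 0 ≤ x → 0 < G x := fun x hx =>
    hgpos _ (hgpos x hx).le
  have hGmono : ∀ x y : ℝ, 0 ≤ x → x < y → G x < G y := by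
    intro x y hx hxy
    exact hganti _ _ (hgpos y (hx.trans hxy.le)).le (hganti x y hx hxy)
  have hgcont : ContinuousOn g (Set.Ici 0) := by
    have : g = fun x => lam / (Real.exp x + x) := funext hg
    rw [this]
    exact ContinuousOn.div continuousOn_const
      ((Real.continuous_exp.add continuous_id).continuousOn)
      (fun x hx => (hden x hx).ne')
  have hgmaps : Set.MapsTo g (Set.Ici 0) (Set.Ici 0) :=
    fun x hx => (hgpos x hx).le
  have hGcont : ContinuousOn G (Set.Ici 0) := hgcont.comp hgcont hgmaps
  -- G x > x on [0, a)
  have hkey : ∀ x ∈ Set.Ico 0 a, x < G x := by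
    rintro x ⟨hx0, hxa⟩
    by_contra hle
    push_neg at hle
    rcases hx0.eq_or_lt with h0 | h0
    · exact absurd (hGpos 0 le_rfl) (by rw [← h0] at hle; linarith)
    · -- 0 < x
      have hne : G x ≠ x := hmin x ⟨h0, hxa⟩
      have hlt : G x < x := lt_of_le_of_ne hle hne
      -- IVT on h = G - id over [0,x]
      set h : ℝ → ℝ := fun y => G y - y with hhdef
      have hcont : ContinuousOn h (Set.Icc 0 x) :=
        (hGcont.mono (by intro y hy; exact hy.1)).sub continuousOn_id
      have h0pos : 0 < h 0 := by simpa [hhdef] using hGpos 0 le_rfl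
      have hxneg : h x < 0 := by simp [hhdef]; linarith
      have : (0 : ℝ) ∈ Set.Ioo (h x) (h 0) := ⟨hxneg, h0pos⟩
      have := intermediate_value_Ioo' h0.le hcont this
      obtain ⟨y, hy, hy0⟩ := this
      have : G y = y := by have := hy0; simp [hhdef] at this; linarith
      exact hmin y ⟨hy.1, hy.2.trans hxa⟩ this
  intro x hx
  set s : ℕ → ℝ := fun n => G^[n] x with hsdef
  have hs_succ : ∀ n, s (n + 1) = G (s n) := by
    intro n; simp [hsdef, Function.iterate_succ_apply']
  have hs_mem : ∀ n, s n ∈ Set.Ico 0 a := by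
    intro n
    induction n with
    | zero => simpa [hsdef] using hx
    | succ k ih =>
      rw [hs_succ]
      constructor
      · exact (hGpos _ ih.1).le
      · calc G (s k) < G a := hGmono _ _ ih.1 ih.2
          _ = a := hper
  have hs_mono : Monotone s := by
    apply monotone_nat_of_le_succ
    intro n
    rw [hs_succ]
    exact (hkey _ (hs_mem n)).le
  have hbdd : BddAbove (Set.range s) := ⟨a, by rintro _ ⟨n, rfl⟩; exact (hs_mem n).2.le⟩
  have hL : Tendsto s atTop (nhds (⨆ n, s n)) := tendsto_atTop_ciSup hs_mono hbdd
  set L : ℝ := ⨆ n, s n with hLdef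
  have hLa : L ≤ a := ciSup_le fun n => (hs_mem n).2.le
  have hL1 : s 1 ≤ L := le_ciSup hbdd 1
  have hLpos : 0 < L := lt_of_lt_of_le (by rw [hs_succ 0]; exact hGpos _ (hs_mem 0).1) hL1
  -- G L = L
  have hfix : G L = L := by
    have h1 : Tendsto (fun n => s (n + 1)) atTop (nhds L) :=
      (tendsto_add_atTop_iff_nat 1).mpr hL
    have h2 : Tendsto s atTop (nhdsWithin L (Set.Ici 0)) := by
      rw [tendsto_nhdsWithin_iff]
      exact ⟨hL, Eventually.of_forall fun n => (hs_mem n).1⟩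
    have h3 : Tendsto (fun n => G (s n)) atTop (nhds (G L)) :=
      (hGcont L hLpos.le).tendsto.comp h2
    have h4 : Tendsto (fun n => s (n + 1)) atTop (nhds (G L)) := by
      simpa only [hs_succ] using h3
    exact tendsto_nhds_unique h4 h1
  have hLeq : L = a := by
    by_contra hne
    exact hmin L ⟨hLpos, lt_of_le_of_ne hLa hne⟩ hfix
  have hiter : ∀ n, g^[2 * n] x = s n := by
    intro n
    rw [Function.iterate_mul]
    congr 1
  rw [← hLeq]
  simpa only [hiter] using hL
end

section
/- For every real λ > 0, the map f_λ has no positive periodic point of period greater than two: for every x > 0 and every integer n ≥ 1, if f_λ^[n](x) = x then f_λ^[2](x) = x. -/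
/-- For every `λ > 0`, the map `f_λ(x) = λ/(e^x + x)` has no positive periodic
point of period greater than two: any positive periodic point is `2`-periodic. -/
theorem stmt_13 (lam : ℝ) (hlam : 0 < lam) :
    ∀ x : ℝ, 0 < x → ∀ n : ℕ, 1 ≤ n →
      (fun y => lam / (Real.exp y + y))^[n] x = x →
      (fun y => lam / (Real.exp y + y))^[2] x = x := by
  set f : ℝ → ℝ := fun y => lam / (Real.exp y + y) with hf
  have hden : ∀ x : ℝ, 0 < x → 0 < Real.exp x + x := fun x hx =>
    add_pos (Real.exp_pos x) hx
  have hfpos : ∀ x : ℝ, 0 < x → 0 < f x := fun x hx =>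
    div_pos hlam (hden x hx)
  have hanti : ∀ a b : ℝ, 0 < a → a < b → f b < f a := by
    intro a b ha hab
    have h : Real.exp a + a < Real.exp b + b :=
      add_lt_add (Real.exp_lt_exp.mpr hab) hab
    exact div_lt_div_of_pos_left hlam (hden a ha) h
  set g : ℝ → ℝ := f^[2] with hg
  have hgpos : ∀ x : ℝ, 0 < x → 0 < g x := by
    intro x hx
    have : g x = f (f x) := by simp [hg, Function.iterate_succ_apply']
    rw [this]
    exact hfpos _ (hfpos _ hx)
  have hgmono : ∀ a b : ℝ, 0 < a → a < b → g a < g b := by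
    intro a b ha hab
    have h1 : f b < f a := hanti a b ha hab
    have h2 : f (f a) < f (f b) := hanti (f b) (f a) (hfpos b (ha.trans hab)) h1
    have e1 : g a = f (f a) := by simp [hg, Function.iterate_succ_apply']
    have e2 : g b = f (f b) := by simp [hg, Function.iterate_succ_apply']
    rw [e1, e2]; exact h2
  -- key lemma: for g strictly monotone on positives, periodic ⇒ fixed
  have key : ∀ x : ℝ, 0 < x → ∀ m : ℕ, 1 ≤ m → g^[m] x = x → g x = x := by
    intro x hx m hm hgm
    have hitpos : ∀ k : ℕ, 0 < g^[k] x := by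
      intro k; induction k with
      | zero => simpa using hx
      | succ k ih =>
        rw [Function.iterate_succ_apply']
        exact hgpos _ ih
    rcases lt_trichotomy (g x) x with h | h | h
    · exfalso
      have hlt : ∀ k : ℕ, g^[k + 1] x < x := by
        intro k; induction k with
        | zero => simpa using h
        | succ k ih =>
          have : g (g^[k + 1] x) < g x :=
            hgmono _ _ (hitpos (k + 1)) ih
          calc g^[k + 2] x = g (g^[k + 1] x) := Function.iterate_succ_apply' g _ x
            _ < g x := this
            _ < x := h
      obtain ⟨k, rfl⟩ := Nat.exists_eq_add_of_le hm
      have := hlt k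
      rw [add_comm 1 k] at hgm
      exact absurd hgm (ne_of_lt this)
    · exact h
    · exfalso
      have hlt : ∀ k : ℕ, x < g^[k + 1] x := by
        intro k; induction k with
        | zero => simpa using h
        | succ k ih =>
          have : g x < g (g^[k + 1] x) := hgmono _ _ hx ih
          calc x < g x := h
            _ < g (g^[k + 1] x) := this
            _ = g^[k + 2] x := (Function.iterate_succ_apply' g _ x).symm
      obtain ⟨k, rfl⟩ := Nat.exists_eq_add_of_le hm
      have := hlt k
      rw [add_comm 1 k] at hgm
      exact absurd hgm (ne_of_gt this)
  intro x hx n hn hfn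
  have hgn : g^[n] x = x := by
    have : g^[n] = f^[2 * n] := (Function.iterate_mul f 2 n).symm
    rw [this, two_mul, Function.iterate_add_apply, hfn, hfn]
  exact key x hx n hn hgn
end

section
/- For every real λ > 0, the map f_λ has a repelling fixed point on the negative real axis: there exists x ∈ ℝ with eˣ + x < 0, λ/(eˣ + x) = x, and λ·(1 + eˣ)/(eˣ + x)² > 1 (i.e. f_λ′(x) < −1). -/
/-- For every `λ > 0`, the map `f_λ(x) = λ/(e^x + x)` has a repelling fixed
point on the negative real axis (where `e^x + x < 0`). -/
theorem stmt_14 (lam : ℝ) (hlam : 0 < lam) :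
    ∃ x : ℝ, Real.exp x + x < 0 ∧ lam / (Real.exp x + x) = x ∧
      1 < lam * (1 + Real.exp x) / (Real.exp x + x) ^ 2 := by
  -- g(x) = exp x + x is continuous and strictly monotone
  have hgc : Continuous fun x : ℝ => Real.exp x + x := by continuity
  have hgm : StrictMono fun x : ℝ => Real.exp x + x :=
    fun a b hab => by
      have := Real.exp_lt_exp.mpr hab
      dsimp; linarith
  -- root x₀ of g in [-1, 0]
  obtain ⟨x₀, hx₀mem, hx₀⟩ : ∃ x₀ ∈ Set.Icc (-1 : ℝ) 0, Real.exp x₀ + x₀ = 0 := by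
    have h1 : Real.exp (-1) + (-1) < 0 := by
      have := Real.exp_lt_one_iff.mpr (by norm_num : (-1:ℝ) < 0)
      linarith
    have h0 : (0:ℝ) ≤ Real.exp 0 + 0 := by simp [Real.exp_zero]
    have := intermediate_value_Icc (by norm_num : (-1:ℝ) ≤ 0) (hgc.continuousOn)
    have : (0:ℝ) ∈ Set.Icc (Real.exp (-1) + (-1)) (Real.exp 0 + 0) :=
      ⟨le_of_lt h1, h0⟩
    obtain ⟨x₀, hmem, heq⟩ := intermediate_value_Icc (by norm_num : (-1:ℝ) ≤ 0)
      hgc.continuousOn this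
    exact ⟨x₀, hmem, heq⟩
  -- h(x) = x * (exp x + x); IVT on [-(lam+1), x₀]
  set a : ℝ := -(lam + 1) with ha
  have hax₀ : a ≤ x₀ := by
    have := hx₀mem.1
    have : (-1:ℝ) ≤ x₀ := hx₀mem.1
    simp only [ha]; linarith
  have hhc : Continuous fun x : ℝ => x * (Real.exp x + x) := by continuity
  have hha : lam ≤ a * (Real.exp a + a) := by
    have he : Real.exp a ≤ 1 := Real.exp_le_one_iff.mpr (by simp [ha]; linarith)
    have h1 : Real.exp a + a ≤ -lam := by simp only [ha] at he ⊢; linarith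
    have h2 : a * (Real.exp a + a) ≥ (-(lam+1)) * (-lam) := by
      have := Real.exp_pos a
      nlinarith
    nlinarith
  have hhx₀ : x₀ * (Real.exp x₀ + x₀) = 0 := by rw [hx₀]; ring
  obtain ⟨x, hxmem, hx⟩ : ∃ x ∈ Set.Icc a x₀, x * (Real.exp x + x) = lam := by
    have hmem : lam ∈ Set.Icc (x₀ * (Real.exp x₀ + x₀)) (a * (Real.exp a + a)) := by
      rw [hhx₀]; exact ⟨le_of_lt hlam, hha⟩
    obtain ⟨x, hm, he⟩ := intermediate_value_Icc' hax₀ hhc.continuousOn hmem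
    exact ⟨x, hm, he⟩
  -- x < x₀ since h(x₀) = 0 ≠ lam
  have hxlt : x < x₀ := by
    rcases lt_or_eq_of_le hxmem.2 with h | h
    · exact h
    · exfalso; rw [h, hhx₀] at hx; linarith
  have hs : Real.exp x + x < 0 := by
    have := hgm hxlt
    simp only at this
    linarith [hx₀, this]
  have hsne : Real.exp x + x ≠ 0 := ne_of_lt hs
  have hxneg : x < 0 := by nlinarith
  refine ⟨x, hs, ?_, ?_⟩
  · field_simp
    linarith [hx]
  · rw [lt_div_iff₀ (by positivity : (0:ℝ) < (Real.exp x + x)^2)]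
    have hE : 0 < Real.exp x := Real.exp_pos x
    nlinarith [mul_pos hE (by linarith : (0:ℝ) < 1 - x),
      mul_pos (neg_pos.mpr hs) (mul_pos hE (by linarith : (0:ℝ) < 1 - x))]
end

section
/- Let F : ℝ → ℝ be defined by F(x) = 0.1/(x⁹ + eˣ) − 0.99. There exist real numbers a₁ ∈ (−0.91, −0.72) and a₂ ∈ (−1.069, −1) such that for i = 1, 2: a_i⁹ + e^{a_i} ≠ 0, F(a_i) = a_i, and 0 < 0.1·(9·a_i⁸ + e^{a_i})/(a_i⁹ + e^{a_i})² < 1 (i.e. a_i is an attracting fixed point of F, since F′(x) = −0.1(9x⁸+eˣ)/(x⁹+eˣ)²). -/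
set_option maxHeartbeats 1000000

private lemma exp_ge_aux (x : ℝ) (n : ℕ) (hn : (n:ℝ) ≠ 0) (h : 0 ≤ 1 + x / n) :
    (1 + x / n) ^ n ≤ Real.exp x := by
  have h1 : 1 + x / n ≤ Real.exp (x / n) := by
    have := Real.add_one_le_exp (x / n); linarith
  calc (1 + x / n) ^ n ≤ (Real.exp (x / n)) ^ n := pow_le_pow_left₀ h h1 n
    _ = Real.exp (n * (x / n)) := (Real.exp_nat_mul _ n).symm
    _ = Real.exp x := by rw [mul_div_cancel₀ _ hn]

private lemma exp_le_aux (x : ℝ) (n : ℕ) (hn : (n:ℝ) ≠ 0) (h : 0 < 1 - x / n) :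
    Real.exp x ≤ 1 / (1 - x / n) ^ n := by
  have h2 : (1 - x / n) ^ n ≤ Real.exp (-x) := by
    have h3 := exp_ge_aux (-x) n hn (by rw [neg_div]; linarith)
    have e : (1 + -x / n) = (1 - x / n) := by ring
    rwa [e] at h3
  have hp : (0:ℝ) < (1 - x / n) ^ n := pow_pos h n
  have : Real.exp x = 1 / Real.exp (-x) := by
    rw [Real.exp_neg]; field_simp
  rw [this]
  exact one_div_le_one_div_of_le hp h2

private lemma key (a : ℝ) (hg : (a + 0.99) * (a ^ 9 + Real.exp a) = 0.1)
    (hd : 10 * (9 * a ^ 8 + Real.exp a) * (a + 0.99) ^ 2 < 1) :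
    a ^ 9 + Real.exp a ≠ 0 ∧ (0.1 / (a ^ 9 + Real.exp a) - 0.99 = a) ∧
    0 < 0.1 * (9 * a ^ 8 + Real.exp a) / (a ^ 9 + Real.exp a) ^ 2 ∧
    0.1 * (9 * a ^ 8 + Real.exp a) / (a ^ 9 + Real.exp a) ^ 2 < 1 := by
  have hD : a ^ 9 + Real.exp a ≠ 0 := by
    intro h; rw [h, mul_zero] at hg; norm_num at hg
  have hc : a + 0.99 ≠ 0 := by
    intro h; rw [h, zero_mul] at hg; norm_num at hg
  have hD2 : (0:ℝ) < (a ^ 9 + Real.exp a) ^ 2 := by positivity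
  have hc2 : (0:ℝ) < (a + 0.99) ^ 2 := by positivity
  have hN : (0:ℝ) < 9 * a ^ 8 + Real.exp a := by positivity
  refine ⟨hD, ?_, ?_, ?_⟩
  · field_simp
    nlinarith [hg]
  · positivity
  · rw [div_lt_one hD2]
    have hsq : (a ^ 9 + Real.exp a) ^ 2 * (a + 0.99) ^ 2 = 0.01 := by
      nlinarith [hg]
    nlinarith [mul_pos hc2 hD2, hd, hsq]

/-- The map `F(x) = 0.1/(x⁹ + eˣ) − 0.99` has attracting fixed points
`a₁ ∈ (−0.91, −0.72)` and `a₂ ∈ (−1.069, −1)`. -/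
theorem stmt_15 (F : ℝ → ℝ) (hF : ∀ x : ℝ, F x = 0.1 / (x ^ 9 + Real.exp x) - 0.99) :
    ∃ a₁ ∈ Set.Ioo (-0.91 : ℝ) (-0.72), ∃ a₂ ∈ Set.Ioo (-1.069 : ℝ) (-1),
      (a₁ ^ 9 + Real.exp a₁ ≠ 0 ∧ F a₁ = a₁ ∧
        0 < 0.1 * (9 * a₁ ^ 8 + Real.exp a₁) / (a₁ ^ 9 + Real.exp a₁) ^ 2 ∧
        0.1 * (9 * a₁ ^ 8 + Real.exp a₁) / (a₁ ^ 9 + Real.exp a₁) ^ 2 < 1) ∧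
      (a₂ ^ 9 + Real.exp a₂ ≠ 0 ∧ F a₂ = a₂ ∧
        0 < 0.1 * (9 * a₂ ^ 8 + Real.exp a₂) / (a₂ ^ 9 + Real.exp a₂) ^ 2 ∧
        0.1 * (9 * a₂ ^ 8 + Real.exp a₂) / (a₂ ^ 9 + Real.exp a₂) ^ 2 < 1) := by
  set g : ℝ → ℝ := fun x => (x + 0.99) * (x ^ 9 + Real.exp x) - 0.1 with hgdef
  have hcont : Continuous g := by fun_prop
  -- numeric exponential bounds
  have e75 : Real.exp (-0.75) ≤ 1 / (1 + 0.75/8) ^ 8 := by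
    have := exp_le_aux (-0.75) 8 (by norm_num) (by norm_num)
    norm_num at this ⊢; linarith
  have e74lb : (1 - 0.74/16 : ℝ) ^ 16 ≤ Real.exp (-0.74) := by
    have := exp_ge_aux (-0.74) 16 (by norm_num) (by norm_num)
    norm_num at this ⊢; linarith
  have e74ub : Real.exp (-0.74) ≤ 1 / (1 + 0.74) := by
    have := exp_le_aux (-0.74) 1 (by norm_num) (by norm_num)
    norm_num at this ⊢; linarith
  have e1066 : Real.exp (-1.066) ≤ 1 / (1 + 1.066/2) ^ 2 := by
    have := exp_le_aux (-1.066) 2 (by norm_num) (by norm_num)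
    norm_num at this ⊢; linarith
  have e106lb : (1 - 1.06/4 : ℝ) ^ 4 ≤ Real.exp (-1.06) := by
    have := exp_ge_aux (-1.06) 4 (by norm_num) (by norm_num)
    norm_num at this ⊢; linarith
  have e106ub : Real.exp (-1.06) ≤ 1 / (1 + 1.06) := by
    have := exp_le_aux (-1.06) 1 (by norm_num) (by norm_num)
    norm_num at this ⊢; linarith
  -- sign of g at endpoints
  have g75 : g (-0.75) < 0 := by
    simp only [hgdef]; nlinarith [e75]
  have g74 : 0 < g (-0.74) := by
    simp only [hgdef]; nlinarith [e74lb]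
  have g1066 : 0 < g (-1.066) := by
    simp only [hgdef]; nlinarith [e1066]
  have g106 : g (-1.06) < 0 := by
    simp only [hgdef]; nlinarith [e106lb]
  -- roots via IVT
  obtain ⟨a₁, ha₁mem, ha₁⟩ : ∃ a ∈ Set.Icc (-0.75:ℝ) (-0.74), g a = 0 := by
    have h := intermediate_value_Icc (by norm_num : (-0.75:ℝ) ≤ -0.74)
      hcont.continuousOn
    have h0 : (0:ℝ) ∈ Set.Icc (g (-0.75)) (g (-0.74)) := ⟨le_of_lt g75, le_of_lt g74⟩
    obtain ⟨a, ha, hga⟩ := h h0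
    exact ⟨a, ha, hga⟩
  obtain ⟨a₂, ha₂mem, ha₂⟩ : ∃ a ∈ Set.Icc (-1.066:ℝ) (-1.06), g a = 0 := by
    have h := intermediate_value_Icc' (by norm_num : (-1.066:ℝ) ≤ -1.06)
      hcont.continuousOn
    have h0 : (0:ℝ) ∈ Set.Icc (g (-1.06)) (g (-1.066)) := ⟨le_of_lt g106, le_of_lt g1066⟩
    obtain ⟨a, ha, hga⟩ := h h0
    exact ⟨a, ha, hga⟩
  obtain ⟨hl₁, hu₁⟩ := ha₁mem
  obtain ⟨hl₂, hu₂⟩ := ha₂mem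
  have hg₁ : (a₁ + 0.99) * (a₁ ^ 9 + Real.exp a₁) = 0.1 := by
    simp only [hgdef] at ha₁; linarith
  have hg₂ : (a₂ + 0.99) * (a₂ ^ 9 + Real.exp a₂) = 0.1 := by
    simp only [hgdef] at ha₂; linarith
  -- derivative bounds
  have hd₁ : 10 * (9 * a₁ ^ 8 + Real.exp a₁) * (a₁ + 0.99) ^ 2 < 1 := by
    have h8 : a₁ ^ 8 ≤ (0.75:ℝ) ^ 8 := by
      have : (-a₁) ^ 8 ≤ (0.75:ℝ) ^ 8 :=
        pow_le_pow_left₀ (by linarith) (by linarith) 8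
      calc a₁ ^ 8 = (-a₁)^8 := by ring
        _ ≤ _ := this
    have he : Real.exp a₁ ≤ 1 / (1 + 0.74) :=
      le_trans (Real.exp_le_exp.2 (by linarith : a₁ ≤ -0.74)) e74ub
    have hcb : (a₁ + 0.99) ^ 2 ≤ (0.25:ℝ)^2 := by nlinarith
    have hNpos : (0:ℝ) < 9 * a₁ ^ 8 + Real.exp a₁ := by positivity
    nlinarith [mul_le_mul (by linarith : 9 * a₁ ^ 8 + Real.exp a₁ ≤ 9 * (0.75:ℝ)^8 + 1/(1+0.74)) hcb (sq_nonneg (a₁ + 0.99)) (by norm_num : (0:ℝ) ≤ 9 * (0.75:ℝ)^8 + 1/(1+0.74))]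
  have hd₂ : 10 * (9 * a₂ ^ 8 + Real.exp a₂) * (a₂ + 0.99) ^ 2 < 1 := by
    have h8 : a₂ ^ 8 ≤ (1.066:ℝ) ^ 8 := by
      have : (-a₂) ^ 8 ≤ (1.066:ℝ) ^ 8 :=
        pow_le_pow_left₀ (by linarith) (by linarith) 8
      calc a₂ ^ 8 = (-a₂)^8 := by ring
        _ ≤ _ := this
    have he : Real.exp a₂ ≤ 1 / (1 + 1.06) :=
      le_trans (Real.exp_le_exp.2 (by linarith : a₂ ≤ -1.06)) e106ub
    have hcb : (a₂ + 0.99) ^ 2 ≤ (0.076:ℝ)^2 := by nlinarith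
    have hNpos : (0:ℝ) < 9 * a₂ ^ 8 + Real.exp a₂ := by positivity
    nlinarith [mul_le_mul (by linarith : 9 * a₂ ^ 8 + Real.exp a₂ ≤ 9 * (1.066:ℝ)^8 + 1/(1+1.06)) hcb (sq_nonneg (a₂ + 0.99)) (by norm_num : (0:ℝ) ≤ 9 * (1.066:ℝ)^8 + 1/(1+1.06))]
  obtain ⟨hD₁, hFa₁, hp₁, hlt₁⟩ := key a₁ hg₁ hd₁
  obtain ⟨hD₂, hFa₂, hp₂, hlt₂⟩ := key a₂ hg₂ hd₂
  refine ⟨a₁, ⟨by norm_num at hl₁ ⊢; linarith, by norm_num at hu₁ ⊢; linarith⟩,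
    a₂, ⟨by norm_num at hl₂ ⊢; linarith, by norm_num at hu₂ ⊢; linarith⟩,
    ⟨hD₁, by rw [hF]; exact hFa₁, hp₁, hlt₁⟩,
    ⟨hD₂, by rw [hF]; exact hFa₂, hp₂, hlt₂⟩⟩
end

section
/- Define h : ℝ → ℝ by h(x) = 10·(x + 0.99)²·(9x⁸ + eˣ). Then h is strictly increasing on the interval (−0.99, −0.72], h is strictly decreasing on the interval [−1.069, −1], and 0 < h(x) < 1 for every x ∈ (−0.99, −0.72] and for every x ∈ [−1.069, −1]. -/
/-!
Writing `h(x) = 10 (x + 0.99)² (9x⁸ + eˣ)`, one computes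
`h′(x) = 10 (x + 0.99) (90x⁸ + 71.28x⁷ + eˣ (x + 2.99))`, and the second factor is positive on
`(−2.99, −0.72]`: for `x ≤ −1` its polynomial part `x⁷ (90x + 71.28)` is nonnegative, while for
`x ≥ −1` that part is at least `−0.65` and `eˣ (x + 2.99) ≥ 1.99 / e > 0.73`. So `h` decreases to
its zero at `−0.99` and increases afterwards, and on `[−1.069, −0.72]` it stays below
`max (h (−1.069)) (h (−0.72)) ≈ 0.98`, the endpoint values being bounded through `eˣ ≤ 1 / (1 − x)`.
-/

open Real Set

noncomputable def multiplier (x : ℝ) : ℝ := 10 * (x + 0.99) ^ 2 * (9 * x ^ 8 + exp x)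

lemma pow_seven_mul_eleven_sub_le_one {s : ℝ} (hs : 1 ≤ s) : s ^ 7 * (11 - 10 * s) ≤ 1 := by
  have hk : ∀ k ≤ 7, s ^ k ≤ s ^ 7 := fun k hk => pow_le_pow_right₀ hs hk
  have hfactor : 0 ≤ 10 * s ^ 7 - s ^ 6 - s ^ 5 - s ^ 4 - s ^ 3 - s ^ 2 - s - 1 := by
    linarith [hk 6 (by norm_num), hk 5 (by norm_num), hk 4 (by norm_num), hk 3 (by norm_num),
      hk 2 (by norm_num), hk 1 (by norm_num), one_le_pow₀ (n := 7) hs]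
  have hid : 1 - s ^ 7 * (11 - 10 * s)
      = (s - 1) * (10 * s ^ 7 - s ^ 6 - s ^ 5 - s ^ 4 - s ^ 3 - s ^ 2 - s - 1) := by ring
  nlinarith [mul_nonneg (sub_nonneg.2 hs) hfactor]

/-- With `s = x / (-0.72)` the octic is `-6.48 · 0.72⁷ · s⁷ (11 - 10 s)`, and `6.48 · 0.72⁷ < 0.65`. -/
lemma neg_065_le_octic {x : ℝ} (hx : x ≤ -0.72) : -0.65 ≤ 90 * x ^ 8 + 71.28 * x ^ 7 := by
  have hs : 1 ≤ x / (-0.72) := by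
    rw [le_div_iff_of_neg (by norm_num)]
    linarith
  have hid : 90 * x ^ 8 + 71.28 * x ^ 7
      = -(6.48 * 0.72 ^ 7) * ((x / (-0.72)) ^ 7 * (11 - 10 * (x / (-0.72)))) := by
    field_simp
    ring
  rw [hid]
  nlinarith [pow_seven_mul_eleven_sub_le_one hs]

lemma octic_nonneg {x : ℝ} (hx : x ≤ -0.792) : 0 ≤ 90 * x ^ 8 + 71.28 * x ^ 7 := by
  have h7 : x ^ 7 ≤ 0 := Odd.pow_nonpos (by decide) (by linarith)
  nlinarith

lemma exp_le_inv_one_sub {x : ℝ} (hx : x < 1) : exp x ≤ (1 - x)⁻¹ := by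
  rw [le_inv_comm₀ (exp_pos x) (by linarith), ← exp_neg]
  exact one_sub_le_exp_neg x

lemma multiplier_deriv_cofactor_pos {x : ℝ} (hx₁ : -2.99 < x) (hx₂ : x ≤ -0.72) :
    0 < 90 * x ^ 8 + 71.28 * x ^ 7 + exp x * (x + 2.99) := by
  have hexp : 0 < exp x * (x + 2.99) := mul_pos (exp_pos x) (by linarith)
  rcases le_or_gt x (-1) with hx | hx
  · linarith [octic_nonneg (x := x) (by linarith)]
  · have : 0.36787944116 * 1.99 ≤ exp x * (x + 2.99) :=
      mul_le_mul (exp_neg_one_gt_d9.trans_le (exp_le_exp.2 hx.le)).le (by linarith)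
        (by norm_num) (exp_pos x).le
    linarith [neg_065_le_octic hx₂]

lemma hasDerivAt_multiplier (x : ℝ) :
    HasDerivAt multiplier
      (10 * (x + 0.99) * (90 * x ^ 8 + 71.28 * x ^ 7 + exp x * (x + 2.99))) x := by
  have h₁ := (((hasDerivAt_id x).add_const 0.99).fun_pow 2).const_mul 10
  have h₂ := ((hasDerivAt_pow 8 x).const_mul 9).fun_add (hasDerivAt_exp x)
  refine (h₁.fun_mul h₂).congr_deriv ?_
  simp only [id, Nat.cast_ofNat]
  ring

lemma multiplier_strictAntiOn : StrictAntiOn multiplier (Icc (-2.99) (-0.99)) := by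
  refine strictAntiOn_of_deriv_neg (convex_Icc _ _)
    (fun x _ => (hasDerivAt_multiplier x).continuousAt.continuousWithinAt) fun x hx => ?_
  rw [interior_Icc] at hx
  rw [(hasDerivAt_multiplier x).deriv]
  exact mul_neg_of_neg_of_pos (by linarith [hx.2])
    (multiplier_deriv_cofactor_pos hx.1 (by linarith [hx.2]))

lemma multiplier_strictMonoOn : StrictMonoOn multiplier (Icc (-0.99) (-0.72)) := by
  refine strictMonoOn_of_deriv_pos (convex_Icc _ _)
    (fun x _ => (hasDerivAt_multiplier x).continuousAt.continuousWithinAt) fun x hx => ?_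
  rw [interior_Icc] at hx
  rw [(hasDerivAt_multiplier x).deriv]
  exact mul_pos (by linarith [hx.1]) (multiplier_deriv_cofactor_pos (by linarith [hx.1]) hx.2.le)

lemma multiplier_pos {x : ℝ} (hx : x ≠ -0.99) : 0 < multiplier x := by
  have : x + 0.99 ≠ 0 := fun h => hx (by linarith)
  unfold multiplier
  positivity

lemma multiplier_neg_1069_lt_one : multiplier (-1.069) < 1 := by
  have := exp_le_inv_one_sub (x := -1.069) (by norm_num)
  unfold multiplier
  norm_num at this ⊢
  linarith

lemma multiplier_neg_072_lt_one : multiplier (-0.72) < 1 := by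
  have := exp_le_inv_one_sub (x := -0.72) (by norm_num)
  unfold multiplier
  norm_num at this ⊢
  linarith

lemma multiplier_lt_one {x : ℝ} (hx : x ∈ Icc (-1.069) (-0.72)) : multiplier x < 1 := by
  rcases le_total x (-0.99) with h | h
  · calc multiplier x ≤ multiplier (-1.069) :=
          multiplier_strictAntiOn.antitoneOn ⟨by norm_num, by norm_num⟩
            ⟨by linarith [hx.1], h⟩ hx.1
      _ < 1 := multiplier_neg_1069_lt_one
  · calc multiplier x ≤ multiplier (-0.72) :=
          multiplier_strictMonoOn.monotoneOn ⟨h, hx.2⟩ ⟨by norm_num, le_rfl⟩ hx.2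
      _ < 1 := multiplier_neg_072_lt_one

/-- The multiplier function `h(x) = 10 (x + 0.99)² (9x⁸ + eˣ)` is strictly
increasing on `(−0.99, −0.72]`, strictly decreasing on `[−1.069, −1]`, and
satisfies `0 < h(x) < 1` on both intervals. -/
theorem stmt_16 (h : ℝ → ℝ)
    (hh : ∀ x : ℝ, h x = 10 * (x + 0.99) ^ 2 * (9 * x ^ 8 + Real.exp x)) :
    StrictMonoOn h (Set.Ioc (-0.99 : ℝ) (-0.72)) ∧
      StrictAntiOn h (Set.Icc (-1.069 : ℝ) (-1)) ∧
      (∀ x ∈ Set.Ioc (-0.99 : ℝ) (-0.72), 0 < h x ∧ h x < 1) ∧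
      (∀ x ∈ Set.Icc (-1.069 : ℝ) (-1), 0 < h x ∧ h x < 1) := by
  obtain rfl : h = multiplier := funext hh
  have hIoc : Ioc (-0.99 : ℝ) (-0.72) ⊆ Icc (-1.069) (-0.72) :=
    Ioc_subset_Icc_self.trans (Icc_subset_Icc_left (by norm_num))
  have hIcc : Icc (-1.069 : ℝ) (-1) ⊆ Icc (-1.069) (-0.72) := Icc_subset_Icc_right (by norm_num)
  refine ⟨multiplier_strictMonoOn.mono Ioc_subset_Icc_self,
    multiplier_strictAntiOn.mono (Icc_subset_Icc (by norm_num) (by norm_num)),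
    fun x hx => ⟨multiplier_pos hx.1.ne', multiplier_lt_one (hIoc hx)⟩,
    fun x hx => ⟨multiplier_pos (by linarith [hx.2]), multiplier_lt_one (hIcc hx)⟩⟩
end

section
/- Let b ∈ ℂ, r > 0, and let g : ℂ → ℂ be analytic on the closed ball of center b and radius r with m := inf{‖g(z)‖ : ‖z − b‖ ≤ r} > 0. Then for every ε with 0 < ε < r·m/2, the map F(z) = ε/g(z) + b satisfies ‖F(z) − b‖ < r/2 for all z in the closed ball (so F maps the ball strictly into itself), and F has a fixed point z₀ with ‖z₀ − b‖ < r/2 and ‖F′(z₀)‖ < 1 (an attracting fixed point). -/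
/-!
On the closed ball `‖z - b‖ ≤ r` we have `‖ε / g z‖ ≤ ε / m < r / 2`, so `F = ε / g + b` maps the
ball into the closed ball of radius `r / 2` about `b`. For `z` in the small ball, the ball of
radius `r / 2` about `z` lies in the big one, and the Cauchy estimate gives
`‖F' z‖ ≤ (ε / m) / (r / 2) < 1`. Hence `F` is a contraction of the small ball, and its fixed
point is attracting.
-/

open Metric Set NNReal

theorem exists_fixedPoint_of_norm_deriv_le {𝕜 : Type*} [RCLike 𝕜] {F : 𝕜 → 𝕜} {s : Set 𝕜}
    {K : ℝ} (hK : K < 1) (hs : Convex ℝ s) (hsc : IsClosed s) (hne : s.Nonempty)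
    (hmaps : MapsTo F s s) (hd : ∀ x ∈ s, DifferentiableAt 𝕜 F x)
    (hderiv : ∀ x ∈ s, ‖deriv F x‖ ≤ K) : ∃ x ∈ s, F x = x := by
  obtain ⟨x, hx⟩ := hne
  lift K to ℝ≥0 using (norm_nonneg _).trans (hderiv x hx)
  have hlip : LipschitzOnWith K F s := hs.lipschitzOnWith_of_nnnorm_deriv_le hd
    fun y hy => NNReal.coe_le_coe.1 (hderiv y hy)
  obtain ⟨y, hys, hfix, -⟩ := ContractingWith.exists_fixedPoint' hsc.isComplete hmaps
    ⟨hK, hlip.mapsToRestrict hmaps⟩ hx (edist_ne_top _ _)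
  exact ⟨y, hys, hfix⟩

theorem norm_deriv_le_of_closedBall_subset {E : Type*} [NormedAddCommGroup E]
    [NormedSpace ℂ E] {f : ℂ → E} {U : Set ℂ} {c : ℂ} {R M : ℝ} (hR : 0 < R)
    (hf : DifferentiableOn ℂ f U) (hU : closedBall c R ⊆ U) (hM : ∀ z ∈ U, ‖f z‖ ≤ M) :
    ‖deriv f c‖ ≤ M / R :=
  Complex.norm_deriv_le_of_forall_mem_sphere_norm_le hR (hf.diffContOnCl_ball hU)
    fun z hz => hM z (hU (sphere_subset_closedBall hz))

theorem exists_fixedPoint_add_const_of_norm_le {f : ℂ → ℂ} {b : ℂ} {r ρ : ℝ}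
    (hf : DifferentiableOn ℂ f (closedBall b r)) (hbound : ∀ z ∈ closedBall b r, ‖f z‖ ≤ ρ)
    (hρ0 : 0 ≤ ρ) (hρ : ρ < r / 2) :
    ∃ z₀, ‖z₀ - b‖ ≤ ρ ∧ f z₀ + b = z₀ ∧ ‖deriv (fun z => f z + b) z₀‖ < 1 := by
  have hr : 0 < r / 2 := hρ0.trans_lt hρ
  set s := closedBall b (r / 2)
  have hderiv : ∀ z ∈ s, ‖deriv (fun z => f z + b) z‖ ≤ ρ / (r / 2) := fun z hz => by
    rw [deriv_add_const]
    refine norm_deriv_le_of_closedBall_subset hr hf ?_ hbound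
    exact closedBall_subset_closedBall' (by linarith [mem_closedBall.1 hz])
  have hcontr : ρ / (r / 2) < 1 := (div_lt_one hr).2 hρ
  have hdiff : ∀ z ∈ s, DifferentiableAt ℂ (fun z => f z + b) z := fun z hz =>
    ((hf.mono ball_subset_closedBall).differentiableAt
      (isOpen_ball.mem_nhds (closedBall_subset_ball (by linarith) hz))).add_const b
  have hmaps : MapsTo (fun z => f z + b) s s := fun z hz => by
    rw [mem_closedBall, dist_eq_norm, add_sub_cancel_right]
    exact (hbound z (closedBall_subset_closedBall (by linarith) hz)).trans hρ.le
  obtain ⟨z₀, hz₀, hfix⟩ := exists_fixedPoint_of_norm_deriv_le hcontr (convex_closedBall b _)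
    isClosed_closedBall (nonempty_closedBall.2 hr.le) hmaps hdiff hderiv
  refine ⟨z₀, ?_, hfix, (hderiv z₀ hz₀).trans_lt hcontr⟩
  rw [← hfix, add_sub_cancel_right]
  exact hbound z₀ (closedBall_subset_closedBall (by linarith) hz₀)

theorem stmt_18_general (b : ℂ) (r : ℝ) (g : ℂ → ℂ)
    (hg : ∀ z ∈ Metric.closedBall b r, AnalyticAt ℂ g z)
    (m : ℝ) (hm : m = sInf ((fun z => ‖g z‖) '' Metric.closedBall b r))
    (hm0 : 0 < m) (ε : ℝ) (hε0 : 0 < ε) (hε : ε < r * m / 2) :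
    (∀ z ∈ Metric.closedBall b r, ‖((ε : ℂ) / g z + b) - b‖ < r / 2) ∧
      ∃ z₀ : ℂ, ‖z₀ - b‖ < r / 2 ∧ (ε : ℂ) / g z₀ + b = z₀ ∧
        ‖deriv (fun z => (ε : ℂ) / g z + b) z₀‖ < 1 := by
  have hlow : ∀ z ∈ closedBall b r, m ≤ ‖g z‖ := fun z hz =>
    hm ▸ csInf_le ⟨0, by rintro _ ⟨w, -, rfl⟩; exact norm_nonneg _⟩ (mem_image_of_mem _ hz)
  have hg0 : ∀ z ∈ closedBall b r, g z ≠ 0 := fun z hz =>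
    norm_pos_iff.1 (hm0.trans_le (hlow z hz))
  have hbound : ∀ z ∈ closedBall b r, ‖(ε : ℂ) / g z‖ ≤ ε / m := fun z hz => by
    rw [norm_div, Complex.norm_real, Real.norm_of_nonneg hε0.le]
    exact div_le_div_of_nonneg_left hε0.le hm0 (hlow z hz)
  have hρ : ε / m < r / 2 := by
    rw [div_lt_iff₀ hm0]
    linarith
  have hdiff : DifferentiableOn ℂ (fun z => (ε : ℂ) / g z) (closedBall b r) := fun z hz =>
    ((differentiableAt_const _).div (hg z hz).differentiableAt (hg0 z hz)).differentiableWithinAt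
  refine ⟨fun z hz => ?_, ?_⟩
  · rw [add_sub_cancel_right]
    exact (hbound z hz).trans_lt hρ
  · obtain ⟨z₀, hz₀, hfix, hderiv⟩ := exists_fixedPoint_add_const_of_norm_le hdiff hbound (by positivity) hρ
    exact ⟨z₀, hz₀.trans_lt hρ, hfix, hderiv⟩

/-- Let `g` be analytic on the closed ball of center `b` and radius `r > 0`,
with `m := inf {‖g z‖ : ‖z - b‖ ≤ r} > 0`. Then for `0 < ε < r m / 2` the map
`F(z) = ε / g(z) + b` maps the closed ball strictly into the ball of radius
`r/2` about `b`, and `F` has an attracting fixed point `z₀` with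
`‖z₀ - b‖ < r/2`. -/
theorem stmt_18 (b : ℂ) (r : ℝ) (hr : 0 < r) (g : ℂ → ℂ)
    (hg : ∀ z ∈ Metric.closedBall b r, AnalyticAt ℂ g z)
    (m : ℝ) (hm : m = sInf ((fun z => ‖g z‖) '' Metric.closedBall b r))
    (hm0 : 0 < m) (ε : ℝ) (hε0 : 0 < ε) (hε : ε < r * m / 2) :
    (∀ z ∈ Metric.closedBall b r, ‖((ε : ℂ) / g z + b) - b‖ < r / 2) ∧
      ∃ z₀ : ℂ, ‖z₀ - b‖ < r / 2 ∧ (ε : ℂ) / g z₀ + b = z₀ ∧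
        ‖deriv (fun z => (ε : ℂ) / g z + b) z₀‖ < 1 :=
  stmt_18_general b r g hg m hm hm0 ε hε0 hε
end
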